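/- Let G be a group containing a subgroup isomorphic to the free product H * ⟨x⟩ (where ⟨x⟩ ≅ ℤ), and suppose there exist a finite-index subgroup G' of G containing H * ⟨x⟩ and a retraction G' → H * ⟨x⟩. Then in H₁(G';ℝ), the class [x] does not lie in the real span of {[g] : g ∈ H}. -/

import Mathlib

/-!
Compose the retraction `G' → H * ⟨x⟩` with the projection `H * ⟨x⟩ → ℤ` that kills `H`.
The resulting character of `G'` factors through `H₁(G'; ℝ)` as a real linear functional
that vanishes on the classes of `H` but takes the value `1` on `[x]`.
-/

open TensorProduct

section RealHomologyFunctional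

variable {G : Type*} [Group G]

noncomputable def realHomologyFunctional (φ : G →* Multiplicative ℤ) :
    ℝ ⊗[ℤ] Additive (Abelianization G) →ₗ[ℝ] ℝ :=
  ((Int.castAddHom ℝ).comp
    (MonoidHom.toAdditiveLeft (Abelianization.lift φ))).toIntLinearMap.liftBaseChange ℝ

@[simp]
theorem realHomologyFunctional_tmul_of (φ : G →* Multiplicative ℤ) (g : G) :
    realHomologyFunctional φ ((1 : ℝ) ⊗ₜ[ℤ] Additive.ofMul (Abelianization.of g)) =
      ((φ g).toAdd : ℝ) := by
  simp [realHomologyFunctional]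

theorem tmul_of_notMem_span_of_map_eq_one (φ : G →* Multiplicative ℤ) {S : Set G}
    (hS : ∀ g ∈ S, φ g = 1) {g₀ : G} (hg₀ : φ g₀ ≠ 1) :
    ((1 : ℝ) ⊗ₜ[ℤ] Additive.ofMul (Abelianization.of g₀) : ℝ ⊗[ℤ] Additive (Abelianization G))
      ∉ Submodule.span ℝ
          ((fun g : G => ((1 : ℝ) ⊗ₜ[ℤ] Additive.ofMul (Abelianization.of g)
              : ℝ ⊗[ℤ] Additive (Abelianization G))) '' S) := by
  have hspan : Submodule.span ℝ
      ((fun g : G => ((1 : ℝ) ⊗ₜ[ℤ] Additive.ofMul (Abelianization.of g)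
          : ℝ ⊗[ℤ] Additive (Abelianization G))) '' S) ≤
      LinearMap.ker (realHomologyFunctional φ) := by
    refine Submodule.span_le.mpr ?_
    rintro _ ⟨g, hg, rfl⟩
    simp [hS g hg]
  intro hmem
  apply hg₀
  simpa using hspan hmem

end RealHomologyFunctional

theorem free_product_retract_class_not_in_span_general
    (G : Type*) [Group G] (G' : Subgroup G)
    (H : Subgroup G) (x : G) (hx : x ∈ G')
    (hrange : ∀ w : Monoid.Coprod H (Multiplicative ℤ),
      Monoid.Coprod.lift H.subtype (zpowersHom G x) w ∈ G')
    (r : G' →* Monoid.Coprod H (Multiplicative ℤ))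
    (hr : ∀ w : Monoid.Coprod H (Multiplicative ℤ),
      r ⟨Monoid.Coprod.lift H.subtype (zpowersHom G x) w, hrange w⟩ = w) :
    ((1 : ℝ) ⊗ₜ[ℤ] Additive.ofMul (Abelianization.of (⟨x, hx⟩ : G'))
        : ℝ ⊗[ℤ] Additive (Abelianization G'))
      ∉ Submodule.span ℝ
          ((fun g : G' => ((1 : ℝ) ⊗ₜ[ℤ] Additive.ofMul (Abelianization.of g)
              : ℝ ⊗[ℤ] Additive (Abelianization G'))) ''
            {g : G' | (g : G) ∈ H}) := by
  let φ : G' →* Multiplicative ℤ := (Monoid.Coprod.lift 1 (MonoidHom.id _)).comp r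
  have hr_inr : r ⟨x, hx⟩ = Monoid.Coprod.inr (Multiplicative.ofAdd 1) := by
    simpa [zpowersHom] using hr (Monoid.Coprod.inr (Multiplicative.ofAdd 1))
  have hr_inl : ∀ g : G', (hg : (g : G) ∈ H) → r g = Monoid.Coprod.inl ⟨g, hg⟩ :=
    fun g hg => by simpa using hr (Monoid.Coprod.inl ⟨g, hg⟩)
  refine tmul_of_notMem_span_of_map_eq_one φ (fun g hg => ?_) ?_
  · simp [φ, hr_inl g hg]
  · simp [φ, hr_inr]

theorem free_product_retract_class_not_in_span
    (G : Type*) [Group G] (G' : Subgroup G) (hfin : G'.FiniteIndex)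
    (H : Subgroup G) (hHG' : H ≤ G') (x : G) (hx : x ∈ G')
    (hfree : Function.Injective
      (Monoid.Coprod.lift H.subtype (zpowersHom G x)))
    (hrange : ∀ w : Monoid.Coprod H (Multiplicative ℤ),
      Monoid.Coprod.lift H.subtype (zpowersHom G x) w ∈ G')
    (r : G' →* Monoid.Coprod H (Multiplicative ℤ))
    (hr : ∀ w : Monoid.Coprod H (Multiplicative ℤ),
      r ⟨Monoid.Coprod.lift H.subtype (zpowersHom G x) w, hrange w⟩ = w) :
    ((1 : ℝ) ⊗ₜ[ℤ] Additive.ofMul (Abelianization.of (⟨x, hx⟩ : G'))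
        : ℝ ⊗[ℤ] Additive (Abelianization G'))
      ∉ Submodule.span ℝ
          ((fun g : G' => ((1 : ℝ) ⊗ₜ[ℤ] Additive.ofMul (Abelianization.of g)
              : ℝ ⊗[ℤ] Additive (Abelianization G'))) ''
            {g : G' | (g : G) ∈ H}) :=
  free_product_retract_class_not_in_span_general G G' H x hx hrange r hr
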